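/- arXiv:0804.3611 — 4 statements merged into one kernel-verified Lean document; each statement's English description precedes it below -/
import Mathlib

section
/- For every integer ℓ ≥ 1 and real x with |x| < 1, ∑_{k=1}^∞ (∏_{j=0}^{ℓ-1} (k^2 - j^2)) x^k = ((2ℓ)!/2) · x^ℓ(1+x)/(1-x)^{2ℓ+1}. -/
/-!
Write `D_k(a) = a (a - 1) ⋯ (a - k + 1)` for the falling factorial. Both `D_{2ℓ}(k + ℓ)` and
`D_{2ℓ}(k + ℓ - 1)` contain the centred block `D_{2ℓ-1}(k + ℓ - 1) = k ∏_{0<j<ℓ} (k² - j²)`, once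
with the extra factor `k + ℓ` and once with `k - ℓ`; their sum is therefore twice
`∏_{j<ℓ} (k² - j²)`. As `D_{2ℓ}(n) = (2ℓ)! C(n, 2ℓ)`, the series splits into the two shifted
negative binomial series `∑ C(n + r, 2ℓ) xⁿ = x^(2ℓ-r) / (1 - x)^(2ℓ+1)` with `r = ℓ, ℓ - 1`.
-/

open Finset Nat Polynomial

section FallingFactorial

variable {R : Type*} [CommRing R]

lemma descPochhammer_eval_succ_left (k : ℕ) (a : R) :
    (descPochhammer R (k + 1)).eval a = a * (descPochhammer R k).eval (a - 1) := by
  simp [descPochhammer_succ_left]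

lemma descPochhammer_eval_add_mul_eq_prod_sq_sub_sq (r : R) (L : ℕ) :
    (descPochhammer R (2 * L + 1)).eval (r + L) * r =
      ∏ j ∈ range (L + 1), (r ^ 2 - (j : R) ^ 2) := by
  induction L with
  | zero => simp [sq]
  | succ L ih =>
    rw [prod_range_succ, ← ih, show 2 * (L + 1) + 1 = 2 * L + 1 + 1 + 1 by ring,
      descPochhammer_eval_succ_left, descPochhammer_succ_eval,
      show r + ((L + 1 : ℕ) : R) - 1 = r + L by push_cast; ring]
    push_cast
    ring

lemma two_mul_prod_sq_sub_sq (r : R) (ℓ : ℕ) :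
    2 * ∏ j ∈ range ℓ, (r ^ 2 - (j : R) ^ 2) =
      (descPochhammer R (2 * ℓ)).eval (r + ℓ) + (descPochhammer R (2 * ℓ)).eval (r + ℓ - 1) := by
  cases ℓ with
  | zero => norm_num
  | succ L =>
    rw [← descPochhammer_eval_add_mul_eq_prod_sq_sub_sq, show 2 * (L + 1) = 2 * L + 1 + 1 by ring,
      descPochhammer_eval_succ_left (2 * L + 1) (r + _),
      show r + ((L + 1 : ℕ) : R) - 1 = r + L by push_cast; ring,
      descPochhammer_succ_eval (2 * L + 1) (r + L)]
    push_cast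
    ring

end FallingFactorial

section Series

variable {𝕜 : Type*} [NormedField 𝕜] {x : 𝕜}

lemma hasSum_choose_add_mul_geometric {r k : ℕ} (hrk : r ≤ k) (hx : ‖x‖ < 1) :
    HasSum (fun n ↦ ((n + r).choose k : 𝕜) * x ^ n) (x ^ (k - r) / (1 - x) ^ (k + 1)) := by
  obtain ⟨s, rfl⟩ := Nat.exists_eq_add_of_le hrk
  have hshift := ((hasSum_choose_mul_geometric_of_norm_lt_one (r + s) hx).mul_left
    (x ^ s)).congr_fun (g := fun n ↦ ((n + s + r).choose (r + s) : 𝕜) * x ^ (n + s)) fun n ↦ by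
      rw [add_right_comm n s r, add_assoc n r s, pow_add]
      ring
  rw [hasSum_nat_add_iff (f := fun n ↦ ((n + r).choose (r + s) : 𝕜) * x ^ n), sum_eq_zero,
    add_zero, mul_one_div] at hshift
  · simpa using hshift
  · intro i hi
    rw [choose_eq_zero_of_lt (by simp at hi; omega), cast_zero, zero_mul]

lemma hasSum_descPochhammer_mul_geometric {r k : ℕ} (hrk : r ≤ k) (hx : ‖x‖ < 1) :
    HasSum (fun n : ℕ ↦ (descPochhammer 𝕜 k).eval ((n : 𝕜) + r) * x ^ n)
      (k ! * x ^ (k - r) / (1 - x) ^ (k + 1)) := by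
  rw [mul_div_assoc]
  refine ((hasSum_choose_add_mul_geometric hrk hx).mul_left (k ! : 𝕜)).congr_fun fun n ↦ ?_
  rw [← cast_add, descPochhammer_eval_eq_descFactorial, descFactorial_eq_factorial_mul_choose]
  push_cast
  ring

end Series

theorem stmt_5 (ℓ : ℕ) (hℓ : 1 ≤ ℓ) (x : ℝ) (hx : |x| < 1) :
    ∑' k : ℕ, (∏ j ∈ range ℓ, (((k + 1 : ℕ) : ℝ) ^ 2 - (j : ℝ) ^ 2)) * x ^ (k + 1) =
      ((2 * ℓ)! / 2 : ℝ) * (x ^ ℓ * (1 + x) / (1 - x) ^ (2 * ℓ + 1)) := by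
  have hx' : ‖x‖ < 1 := by rwa [Real.norm_eq_abs]
  have h₁ := hasSum_descPochhammer_mul_geometric (show ℓ ≤ 2 * ℓ by omega) hx'
  have h₂ := hasSum_descPochhammer_mul_geometric (show ℓ - 1 ≤ 2 * ℓ by omega) hx'
  rw [cast_sub hℓ, cast_one] at h₂
  have hsum := ((h₁.add h₂).div_const 2).congr_fun
    (g := fun n : ℕ ↦ (∏ j ∈ range ℓ, ((n : ℝ) ^ 2 - (j : ℝ) ^ 2)) * x ^ n) fun n ↦ by
      rw [eq_div_iff two_ne_zero, mul_right_comm, mul_comm _ (2 : ℝ), two_mul_prod_sq_sub_sq,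
        add_sub_assoc]
      ring
  have hzero : (∏ j ∈ range ℓ, (((0 : ℕ) : ℝ) ^ 2 - (j : ℝ) ^ 2)) * x ^ 0 = 0 := by
    rw [prod_eq_zero (mem_range.2 hℓ) (by simp), zero_mul]
  refine ((hasSum_nat_add_iff' 1).2 hsum).tsum_eq.trans ?_
  rw [sum_range_one, hzero, show 2 * ℓ - ℓ = ℓ by omega, show 2 * ℓ - (ℓ - 1) = ℓ + 1 by omega]
  ring
end

section
/- For every integer ℓ ≥ 1 and real x with |x| < 1, ∑_{k=1}^∞ (2k+1)·(∏_{j=0}^{ℓ-1} (k-j)(k+1+j)) x^k = (2ℓ+1)! · x^ℓ(1+x)/(1-x)^{2ℓ+2}. -/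
/-!
With falling and rising factorials, `∏_{j<ℓ} (k - j)(k + 1 + j) = k^{(ℓ)} (k + 1)^{\overline{ℓ}}`
is the falling factorial `(k + ℓ)^{(2ℓ)}`, and `2k + 1 = (k + ℓ + 1) + (k - ℓ)` splits the `k`-th
coefficient as `(k + ℓ + 1)^{(2ℓ+1)} + (k + ℓ)^{(2ℓ+1)}`, i.e. `(2ℓ + 1)!` times
`C(k + ℓ + 1, 2ℓ + 1) + C(k + ℓ, 2ℓ + 1)`. Each of these two binomial series is a shifted
negative binomial series, `∑ₖ C(k + j, n + j) xᵏ = xⁿ / (1 - x)^{n+j+1}`, and they add up to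
`x^ℓ (1 + x) / (1 - x)^{2ℓ+2}`.
-/

open Finset Nat

theorem two_mul_add_one_mul_descFactorial_mul_ascFactorial (k ℓ : ℕ) :
    (2 * k + 1) * (k.descFactorial ℓ * (k + 1).ascFactorial ℓ) =
      (2 * ℓ + 1)! * ((k + ℓ + 1).choose (2 * ℓ + 1) + (k + ℓ).choose (2 * ℓ + 1)) := by
  have hsplit : (k + ℓ).descFactorial (2 * ℓ) = k.descFactorial ℓ * (k + 1).ascFactorial ℓ := by
    rw [← descFactorial_mul_descFactorial (show ℓ ≤ 2 * ℓ by omega),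
      add_descFactorial_eq_ascFactorial, show k + ℓ - ℓ = k by omega, show 2 * ℓ - ℓ = ℓ by omega]
  rw [Nat.mul_add, ← descFactorial_eq_factorial_mul_choose, ← descFactorial_eq_factorial_mul_choose,
    succ_descFactorial_succ, descFactorial_succ, ← hsplit, ← Nat.add_mul]
  rcases le_or_gt ℓ k with hk | hk
  · congr 1
    omega
  -- for `k < ℓ` the common factor vanishes, which absorbs the truncated `k - ℓ`
  · simp [hsplit, descFactorial_of_lt hk]

theorem prod_sub_mul_add_eq_descFactorial_mul_ascFactorial {R : Type*} [CommRing R] (k ℓ : ℕ) :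
    ∏ j ∈ range ℓ, ((k : R) - j) * ((k : R) + 1 + j) =
      (k.descFactorial ℓ * (k + 1).ascFactorial ℓ : ℕ) := by
  rw [prod_mul_distrib, ← descPochhammer_eval_eq_prod_range, descPochhammer_eval_eq_descFactorial,
    ascFactorial_eq_prod_range]
  push_cast
  rfl

theorem two_mul_add_one_mul_prod_sub_mul_add {R : Type*} [CommRing R] (k ℓ : ℕ) :
    (2 * (k : R) + 1) * ∏ j ∈ range ℓ, ((k : R) - j) * ((k : R) + 1 + j) =
      (2 * ℓ + 1)! * (((k + ℓ + 1).choose (2 * ℓ + 1) : R) + (k + ℓ).choose (2 * ℓ + 1)) := by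
  rw [prod_sub_mul_add_eq_descFactorial_mul_ascFactorial]
  simpa using congrArg (Nat.cast : ℕ → R) (two_mul_add_one_mul_descFactorial_mul_ascFactorial k ℓ)

theorem hasSum_choose_add_mul_pow {𝕜 : Type*} [NormedDivisionRing 𝕜] (n j : ℕ) {x : 𝕜}
    (hx : ‖x‖ < 1) :
    HasSum (fun m ↦ ((m + j).choose (n + j) : 𝕜) * x ^ m) (x ^ n / (1 - x) ^ (n + j + 1)) := by
  have hshift : HasSum (fun m ↦ ((m + n + j).choose (n + j) : 𝕜) * x ^ (m + n))
      (x ^ n / (1 - x) ^ (n + j + 1)) := by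
    rw [← mul_one_div]
    refine ((hasSum_choose_mul_geometric_of_norm_lt_one (n + j) hx).mul_left (x ^ n)).congr_fun
      fun m ↦ ?_
    rw [← mul_assoc, ← Nat.cast_comm, mul_assoc, ← pow_add, add_comm n m, add_assoc]
  have hlow : ∑ i ∈ range n, ((i + j).choose (n + j) : 𝕜) * x ^ i = 0 :=
    sum_eq_zero fun i hi ↦ by
      rw [choose_eq_zero_of_lt (Nat.add_lt_add_right (mem_range.mp hi) j), Nat.cast_zero, zero_mul]
  have := (hasSum_nat_add_iff (f := fun m ↦ ((m + j).choose (n + j) : 𝕜) * x ^ m) n).mp hshift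
  rwa [hlow, add_zero] at this

theorem hasSum_two_mul_add_one_mul_prod_sub_mul_add_mul_pow {𝕜 : Type*} [NormedField 𝕜]
    (ℓ : ℕ) {x : 𝕜} (hx : ‖x‖ < 1) :
    HasSum (fun m : ℕ ↦ (2 * (m : 𝕜) + 1) *
        (∏ j ∈ range ℓ, ((m : 𝕜) - j) * ((m : 𝕜) + 1 + j)) * x ^ m)
      ((2 * ℓ + 1)! * (x ^ ℓ * (1 + x) / (1 - x) ^ (2 * ℓ + 2))) := by
  have hupper : HasSum (fun m : ℕ ↦ ((m + ℓ + 1).choose (2 * ℓ + 1) : 𝕜) * x ^ m)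
      (x ^ ℓ / (1 - x) ^ (2 * ℓ + 2)) := by
    rw [show 2 * ℓ + 2 = ℓ + (ℓ + 1) + 1 by ring]
    refine (hasSum_choose_add_mul_pow ℓ (ℓ + 1) hx).congr_fun fun m ↦ ?_
    rw [add_assoc, show 2 * ℓ + 1 = ℓ + (ℓ + 1) by ring]
  have hlower : HasSum (fun m : ℕ ↦ ((m + ℓ).choose (2 * ℓ + 1) : 𝕜) * x ^ m)
      (x ^ (ℓ + 1) / (1 - x) ^ (2 * ℓ + 2)) := by
    rw [show 2 * ℓ + 2 = ℓ + 1 + ℓ + 1 by ring]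
    refine (hasSum_choose_add_mul_pow (ℓ + 1) ℓ hx).congr_fun fun m ↦ ?_
    rw [show 2 * ℓ + 1 = ℓ + 1 + ℓ by ring]
  rw [show x ^ ℓ * (1 + x) / (1 - x) ^ (2 * ℓ + 2) =
    x ^ ℓ / (1 - x) ^ (2 * ℓ + 2) + x ^ (ℓ + 1) / (1 - x) ^ (2 * ℓ + 2) by ring]
  refine ((hupper.add hlower).mul_left _).congr_fun fun m ↦ ?_
  rw [two_mul_add_one_mul_prod_sub_mul_add]
  ring

theorem stmt_6 (ℓ : ℕ) (hℓ : 1 ≤ ℓ) (x : ℝ) (hx : |x| < 1) :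
    ∑' k : ℕ, (2 * ((k + 1 : ℕ) : ℝ) + 1) *
        (∏ j ∈ range ℓ, ((((k + 1 : ℕ) : ℝ)) - j) * (((k + 1 : ℕ) : ℝ) + 1 + j)) * x ^ (k + 1) =
      ((2 * ℓ + 1)! : ℝ) * (x ^ ℓ * (1 + x) / (1 - x) ^ (2 * ℓ + 2)) := by
  have hsum := hasSum_two_mul_add_one_mul_prod_sub_mul_add_mul_pow ℓ
    (show ‖x‖ < 1 by rwa [Real.norm_eq_abs])
  have hzero : ∏ j ∈ range ℓ, (((0 : ℕ) : ℝ) - j) * (((0 : ℕ) : ℝ) + 1 + j) = 0 :=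
    prod_eq_zero (mem_range.mpr hℓ) (by simp)
  have htail := (hasSum_nat_add_iff' 1).mpr hsum
  rw [sum_range_one, hzero, mul_zero, zero_mul, sub_zero] at htail
  exact htail.tsum_eq
end

section
/- Define c_{2k,2ℓ} = ((-1)^{k+ℓ}/((2ℓ)!/2)) ∏_{j=0}^{ℓ-1}(k^2-j^2) for 1 ≤ ℓ ≤ k, c_{2k,0} = 2(-1)^k for k ≥ 1, c_{0,0} = 0, and c_{2k+1,2ℓ+1} = ((-1)^{k+ℓ}(2k+1)/((2ℓ+1)!)) ∏_{j=0}^{ℓ-1}(k-j)(k+1+j) for 0 ≤ ℓ ≤ k. Then for all integers 0 ≤ ℓ < k, c_{2k+1,2ℓ+1} = c_{2k,2ℓ} - c_{2k-1,2ℓ+1}. -/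
open Finset Nat

/-- The coefficients `c_{m,r}`: zero when `m` and `r` have different parity or `m < r`;
`c_{0,0} = 0`; `c_{2k,0} = 2(-1)^k` for `k ≥ 1`;
`c_{2k,2ℓ} = ((-1)^{k+ℓ}/((2ℓ)!/2)) ∏_{j=0}^{ℓ-1}(k²-j²)` for `1 ≤ ℓ ≤ k`;
`c_{2k+1,2ℓ+1} = ((-1)^{k+ℓ}(2k+1)/((2ℓ+1)!)) ∏_{j=0}^{ℓ-1}(k-j)(k+1+j)` for `0 ≤ ℓ ≤ k`. -/
def c (m r : ℕ) : ℚ :=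
  if m % 2 ≠ r % 2 ∨ m < r then 0
  else if m = 0 then 0
  else if m % 2 = 0 then
    (if r = 0 then 2 * (-1) ^ (m / 2)
     else ((-1) ^ (m / 2 + r / 2) / (((2 * (r / 2))! : ℚ) / 2)) *
        ∏ j ∈ range (r / 2), (((m / 2 : ℕ) : ℚ) ^ 2 - (j : ℚ) ^ 2))
  else
    ((-1) ^ (m / 2 + r / 2) * (2 * ((m / 2 : ℕ) : ℚ) + 1) / ((2 * (r / 2) + 1)! : ℚ)) *
      ∏ j ∈ range (r / 2), (((m / 2 : ℕ) : ℚ) - j) * (((m / 2 : ℕ) : ℚ) + 1 + j)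

/-!
With `oddProd ℓ x = ∏_{j<ℓ} (x - j)(x + 1 + j) = (x - ℓ + 1) ⋯ (x + ℓ)` and
`evenProd ℓ x = ∏_{j<ℓ} (x² - j²)`, both `x · oddProd ℓ x` and `x · oddProd ℓ (x - 1)` are
`evenProd ℓ x` times one linear factor, `x + ℓ` resp. `x - ℓ`. Since
`(2x + 1)(x + ℓ) - (2x - 1)(x - ℓ) = 2x(2ℓ + 1)` and `(2ℓ + 1)! = (2ℓ + 1)(2ℓ)!`, this is the
claimed recurrence at `x = k`.
-/

variable {R : Type*} [CommRing R]

def oddProd (ℓ : ℕ) (x : R) : R := ∏ j ∈ range ℓ, (x - j) * (x + 1 + j)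

def evenProd (ℓ : ℕ) (x : R) : R := ∏ j ∈ range ℓ, (x ^ 2 - (j : R) ^ 2)

theorem oddProd_mul_self (ℓ : ℕ) (x : R) : oddProd ℓ x * x = evenProd ℓ x * (x + ℓ) := by
  induction ℓ with
  | zero => simp [oddProd, evenProd]
  | succ ℓ ih =>
    simp only [oddProd, evenProd, prod_range_succ] at ih ⊢
    push_cast
    linear_combination (x - ℓ) * (x + 1 + ℓ) * ih

theorem oddProd_sub_one_mul (ℓ : ℕ) (x : R) :
    oddProd ℓ (x - 1) * x = evenProd ℓ x * (x - ℓ) := by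
  induction ℓ with
  | zero => simp [oddProd, evenProd]
  | succ ℓ ih =>
    simp only [oddProd, evenProd, prod_range_succ] at ih ⊢
    push_cast
    linear_combination (x - 1 - ℓ) * (x + ℓ) * ih

theorem oddProd_recurrence [IsDomain R] (ℓ : ℕ) {x : R} (hx : x ≠ 0) :
    (2 * x + 1) * oddProd ℓ x - (2 * x - 1) * oddProd ℓ (x - 1) =
      2 * (2 * ℓ + 1) * evenProd ℓ x := by
  refine mul_right_cancel₀ hx ?_
  linear_combination (2 * x + 1) * oddProd_mul_self ℓ x - (2 * x - 1) * oddProd_sub_one_mul ℓ x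

theorem c_odd_odd {k ℓ : ℕ} (hℓk : ℓ ≤ k) :
    c (2 * k + 1) (2 * ℓ + 1) =
      (-1) ^ (k + ℓ) * (2 * k + 1) / (2 * ℓ + 1)! * oddProd ℓ (k : ℚ) := by
  rw [c, if_neg (by omega), if_neg (by omega), if_neg (by omega)]
  simp only [show (2 * k + 1) / 2 = k by omega, show (2 * ℓ + 1) / 2 = ℓ by omega, oddProd]

theorem c_even_even {k ℓ : ℕ} (hk : 0 < k) (hℓk : ℓ ≤ k) :
    c (2 * k) (2 * ℓ) = (-1) ^ (k + ℓ) * 2 / (2 * ℓ)! * evenProd ℓ (k : ℚ) := by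
  rw [c, if_neg (by omega), if_neg (by omega), if_pos (by omega)]
  simp only [show 2 * k / 2 = k by omega, show 2 * ℓ / 2 = ℓ by omega, evenProd]
  split_ifs with hℓ
  · obtain rfl : ℓ = 0 := by omega
    simp [mul_comm]
  · rw [div_div_eq_mul_div]

theorem stmt_12 (k ℓ : ℕ) (hℓk : ℓ < k) :
    c (2 * k + 1) (2 * ℓ + 1) = c (2 * k) (2 * ℓ) - c (2 * k - 1) (2 * ℓ + 1) := by
  obtain ⟨n, rfl⟩ : ∃ n, k = n + 1 := ⟨k - 1, by omega⟩
  rw [show 2 * (n + 1) - 1 = 2 * n + 1 by omega, c_odd_odd hℓk.le, c_even_even (by omega) hℓk.le,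
    c_odd_odd (by omega), factorial_succ, show n + 1 + ℓ = n + ℓ + 1 by omega, pow_succ]
  have key := oddProd_recurrence ℓ (n.cast_add_one_ne_zero (R := ℚ))
  rw [add_sub_cancel_right] at key
  push_cast
  field_simp
  linear_combination -key
end

section
/- For every integer ℓ ≥ 1, applying the operator (x d/dx)^2 - ℓ^2 to the function x^ℓ(1+x)/(1-x)^{2ℓ+1} yields (2ℓ+2)(2ℓ+1) · x^{ℓ+1}(1+x)/(1-x)^{2ℓ+3}, for all real x with |x| < 1. -/
/-!
The Euler operator `θ = x d/dx` maps `xⁿ q / (1 - x)ᵏ` to `xⁿ q₁ / (1 - x)ᵏ⁺¹` with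
`q₁ = (n q + x q') (1 - x) + k x q`. Applied to `x^ℓ (1 + x) / (1 - x)^(2ℓ+1)` this gives
`x^ℓ (ℓ (1 + x)² + 2x) / (1 - x)^(2ℓ+2)`; a second application minus `ℓ²` times the original
function is then a rational-function identity.
-/

theorem mul_deriv_pow_mul_div_one_sub_pow (n k : ℕ) {q : ℝ → ℝ} {q' x : ℝ}
    (hq : HasDerivAt q q' x) (hx : x ≠ 1) :
    x * deriv (fun y => y ^ n * q y / (1 - y) ^ k) x =
      x ^ n * ((n * q x + x * q') * (1 - x) + k * x * q x) / (1 - x) ^ (k + 1) := by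
  have h1x : 1 - x ≠ 0 := sub_ne_zero.mpr hx.symm
  have hden : HasDerivAt (fun y => (1 - y) ^ k) (k * (1 - x) ^ (k - 1) * (0 - 1)) x := by
    simpa using ((hasDerivAt_id x).const_sub 1).fun_pow k
  rw [(((hasDerivAt_pow n x).fun_mul hq).fun_div hden (pow_ne_zero k h1x)).deriv]
  have hxn : x * (n * x ^ (n - 1)) = n * x ^ n := by
    cases n <;> simp [pow_succ]; ring
  have hxk : (1 - x) * (k * (1 - x) ^ (k - 1)) = k * (1 - x) ^ k := by
    cases k <;> simp [pow_succ]; ring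
  field_simp
  linear_combination
    q x * (1 - x) ^ k * (1 - x) ^ (k + 1) * hxn + x ^ (n + 1) * q x * (1 - x) ^ k * hxk

theorem stmt_16_general (ℓ : ℕ) (x : ℝ) (hx : |x| < 1) :
    (x * deriv (fun y : ℝ => y * deriv (fun z : ℝ => z ^ ℓ * (1 + z) / (1 - z) ^ (2 * ℓ + 1)) y) x)
        - (ℓ : ℝ) ^ 2 * (x ^ ℓ * (1 + x) / (1 - x) ^ (2 * ℓ + 1)) =
      (2 * ℓ + 2) * (2 * ℓ + 1) * (x ^ (ℓ + 1) * (1 + x) / (1 - x) ^ (2 * ℓ + 3)) := by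
  have hx1 : x ≠ 1 := ((le_abs_self x).trans_lt hx).ne
  have hlin (y : ℝ) : HasDerivAt (fun z : ℝ => 1 + z) 1 y := (hasDerivAt_id y).const_add 1
  have hq : HasDerivAt (fun y : ℝ => ℓ * (1 + y) ^ 2 + 2 * y) (ℓ * (2 * (1 + x)) + 2) x := by
    simpa using (((hlin x).fun_pow 2).const_mul (ℓ : ℝ)).fun_add ((hasDerivAt_id x).const_mul 2)
  have hfirst : (fun y : ℝ => y * deriv (fun z : ℝ => z ^ ℓ * (1 + z) / (1 - z) ^ (2 * ℓ + 1)) y)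
      =ᶠ[nhds x] fun y => y ^ ℓ * (ℓ * (1 + y) ^ 2 + 2 * y) / (1 - y) ^ (2 * ℓ + 2) := by
    filter_upwards [eventually_ne_nhds hx1] with y hy
    rw [mul_deriv_pow_mul_div_one_sub_pow ℓ (2 * ℓ + 1) (hlin y) hy]
    push_cast
    ring
  rw [hfirst.deriv_eq, mul_deriv_pow_mul_div_one_sub_pow ℓ (2 * ℓ + 2) hq hx1]
  have h1x : 1 - x ≠ 0 := sub_ne_zero.mpr hx1.symm
  field_simp
  push_cast
  ring

theorem stmt_16 (ℓ : ℕ) (hℓ : 1 ≤ ℓ) (x : ℝ) (hx : |x| < 1) :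
    (x * deriv (fun y : ℝ => y * deriv (fun z : ℝ => z ^ ℓ * (1 + z) / (1 - z) ^ (2 * ℓ + 1)) y) x)
        - (ℓ : ℝ) ^ 2 * (x ^ ℓ * (1 + x) / (1 - x) ^ (2 * ℓ + 1)) =
      (2 * ℓ + 2) * (2 * ℓ + 1) * (x ^ (ℓ + 1) * (1 + x) / (1 - x) ^ (2 * ℓ + 3)) :=
  stmt_16_general ℓ x hx
end
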